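/- Consider the system of three quaternion matrix equations A_i X_i + Y_i B_i + C_i Z_i D_i + F_i Z_{i+1} G_i = E_i (i = 1, 2, 3) in the unknowns X₁, X₂, X₃, Y₁, Y₂, Y₃, Z₁, Z₂, Z₃, Z₄, where A_i ∈ ℍ^{m×k_i}, B_i ∈ ℍ^{o_i×n}, C_i, F_i ∈ ℍ^{m×q}, D_i, G_i ∈ ℍ^{p×n}, E_i ∈ ℍ^{m×n}, and the unknowns Z_i ∈ ℍ^{q×p} are shared between consecutive equations. Let 𝒟_i = (A_i, B_i, C_i, D_i, F_i, G_i, E_i). If the system has a solution, then: each 𝒟_i (i = 1, 2, 3) satisfies the consistency conditions; each of the coupled data couple(𝒟₁, 𝒟₂) and couple(𝒟₂, 𝒟₃) satisfies the consistency conditions; and the doubly coupled data couple(couple(𝒟₁, 𝒟₂), couple(𝒟₂, 𝒟₃)) satisfies the consistency conditions. -/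

import Mathlib

open Matrix

noncomputable section

/-- The four Penrose equations over the quaternions: `X` is a Moore–Penrose
inverse of `A`. -/
def IsMP {m n : Type} [Fintype m] [Fintype n]
    (A : Matrix m n (Quaternion ℝ)) (X : Matrix n m (Quaternion ℝ)) : Prop :=
  A * X * A = A ∧ X * A * X = X ∧ (A * X)ᴴ = A * X ∧ (X * A)ᴴ = X * A

open scoped Classical

/-- `mp A` is the Moore–Penrose inverse `A†` of `A` (it exists and is unique for
quaternion matrices). -/
def mp {m n : Type} [Fintype m] [Fintype n]
    (A : Matrix m n (Quaternion ℝ)) : Matrix n m (Quaternion ℝ) :=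
  if h : ∃ X, IsMP A X then h.choose else 0

/-- `projL A = L_A = 1 - A† A`. -/
def projL {m n : Type} [Fintype m] [Fintype n] [DecidableEq n]
    (A : Matrix m n (Quaternion ℝ)) : Matrix n n (Quaternion ℝ) :=
  1 - mp A * A

/-- `projR A = R_A = 1 - A A†`. -/
def projR {m n : Type} [Fintype m] [Fintype n] [DecidableEq m]
    (A : Matrix m n (Quaternion ℝ)) : Matrix m m (Quaternion ℝ) :=
  1 - A * mp A

/-- The data `𝒟 = (A, B, C, D, F, G, E)` of a four-term equation
`A X + Y B + C Z D + F W G = E` with `A : m×k`, `B : o×n`, `C : m×q`, `D : p×n`,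
`F : m×l`, `G : s×n`, `E : m×n`. -/
structure QData (m k o n q p l s : Type) where
  A : Matrix m k (Quaternion ℝ)
  B : Matrix o n (Quaternion ℝ)
  C : Matrix m q (Quaternion ℝ)
  D : Matrix p n (Quaternion ℝ)
  F : Matrix m l (Quaternion ℝ)
  G : Matrix s n (Quaternion ℝ)
  E : Matrix m n (Quaternion ℝ)

namespace QData

variable {m k o n q p l s : Type}
  [Fintype m] [Fintype k] [Fintype o] [Fintype n] [Fintype q] [Fintype p]
  [Fintype l] [Fintype s]
  [DecidableEq m] [DecidableEq k] [DecidableEq o] [DecidableEq n]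
  [DecidableEq q] [DecidableEq p] [DecidableEq l] [DecidableEq s]

/-- `A₀ = R_A C`. -/
def A0 (d : QData m k o n q p l s) : Matrix m q (Quaternion ℝ) := projR d.A * d.C

/-- `B₀ = D L_B`. -/
def B0 (d : QData m k o n q p l s) : Matrix p n (Quaternion ℝ) := d.D * projL d.B

/-- `C₀ = R_A F`. -/
def C0 (d : QData m k o n q p l s) : Matrix m l (Quaternion ℝ) := projR d.A * d.F

/-- `D₀ = G L_B`. -/
def D0 (d : QData m k o n q p l s) : Matrix s n (Quaternion ℝ) := d.G * projL d.B

/-- `E₀ = R_A E L_B`. -/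
def E0 (d : QData m k o n q p l s) : Matrix m n (Quaternion ℝ) := projR d.A * d.E * projL d.B

/-- `M = R_{A₀} C₀`. -/
def M (d : QData m k o n q p l s) : Matrix m l (Quaternion ℝ) := projR d.A0 * d.C0

/-- `N = D₀ L_{B₀}`. -/
def N (d : QData m k o n q p l s) : Matrix s n (Quaternion ℝ) := d.D0 * projL d.B0

/-- `S = C₀ L_M`. -/
def S (d : QData m k o n q p l s) : Matrix m l (Quaternion ℝ) := d.C0 * projL d.M

/-- The consistency conditions
`R_M R_{A₀} E₀ = 0`, `E₀ L_{B₀} L_N = 0`, `R_{A₀} E₀ L_{D₀} = 0`, `R_{C₀} E₀ L_{B₀} = 0`. -/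
def Consistent (d : QData m k o n q p l s) : Prop :=
  projR d.M * projR d.A0 * d.E0 = 0 ∧
  d.E0 * projL d.B0 * projL d.N = 0 ∧
  projR d.A0 * d.E0 * projL d.D0 = 0 ∧
  projR d.C0 * d.E0 * projL d.B0 = 0

/-- The coupled data `couple(𝒟, 𝒟')` of two four-term data sharing row/column spaces. -/
def couple {k' o' l' s' : Type}
    [Fintype k'] [Fintype o'] [Fintype l'] [Fintype s']
    [DecidableEq k'] [DecidableEq o'] [DecidableEq l'] [DecidableEq s']
    (d : QData m k o n q p l s) (d' : QData m k' o' n l s l' s') :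
    QData l (l ⊕ l) (s ⊕ s) s l s l' s' where
  A := Matrix.fromCols (projL d.M * projL d.S) (-(projL d'.A0))
  B := Matrix.fromRows (projR d.D0) (-(projR d'.B0))
  C := projL d.M
  D := projR d.N
  F := mp d'.A0 * d'.S
  G := projR d'.N * d'.D0 * mp d'.B0
  E := mp d.M * d.E0 * mp d.D0 + mp d.S * d.S * mp d.C0 * d.E0 * mp d.N
      - mp d'.A0 * d'.E0 * mp d'.B0
      + mp d'.A0 * d'.C0 * mp d'.M * d'.E0 * mp d'.B0
      + mp d'.A0 * d'.S * mp d'.C0 * d'.E0 * mp d'.N * d'.D0 * mp d'.B0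

end QData

/-!
Multiplying `A X + Y B + C Z D + F W G = E` by `R_A` on the left and by `L_B` on the right kills
`X` and `Y` and leaves the reduced equation `A₀ Z B₀ + C₀ W D₀ = E₀`, whose solvability gives the
four consistency conditions at once. If `(Z, W)` solves the reduced equation of `𝒟` and `(W, W')`
that of `𝒟'`, then `W` has two closed forms: the general-solution formula for the second unknown
of `𝒟` and the one for the first unknown of `𝒟'`. Their difference is precisely the equation with
data `couple(𝒟, 𝒟')`, solved by explicit blocks built from `W` and `W'`; its reduced unknowns are
`-W D₀ D₀†` and `-W' D₀' D₀'†`, so the couplings of consecutive equations again share an unknown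
and can be coupled once more.

Moore–Penrose inverses exist by a rank factorization `A = B C`, `A† = Cᴴ (C Cᴴ)⁻¹ (Bᴴ B)⁻¹ Bᴴ`;
the Gram matrices are invertible because `∑ qᵢ q̄ᵢ = 0` forces every `qᵢ = 0` in `ℍ`.
-/

open scoped Quaternion

theorem Quaternion.eq_zero_of_dotProduct_self_star_eq_zero {ι : Type*} [Fintype ι] {v : ι → ℍ}
    (h : v ⬝ᵥ star v = 0) : v = 0 := by
  have hsum : ((∑ i, normSq (v i) : ℝ) : ℍ) = 0 := by
    rw [← h, ← Quaternion.algebraMap_def, map_sum]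
    simp [dotProduct, Quaternion.self_mul_star, Quaternion.algebraMap_def]
  rw [← Quaternion.coe_zero, Quaternion.coe_inj,
    Finset.sum_eq_zero_iff_of_nonneg fun i _ => normSq_nonneg] at hsum
  funext i
  exact normSq_eq_zero.mp (hsum i (Finset.mem_univ i))

theorem Quaternion.vecMul_self_mul_conjTranspose_eq_zero {m n : Type*} [Fintype m] [Fintype n]
    (A : Matrix m n ℍ) (x : m → ℍ) : x ᵥ* (A * Aᴴ) = 0 ↔ x ᵥ* A = 0 := by
  refine ⟨fun h => eq_zero_of_dotProduct_self_star_eq_zero ?_, fun h => ?_⟩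
  · rw [star_vecMul, dotProduct_mulVec, vecMul_vecMul, h, zero_dotProduct]
  · rw [← vecMul_vecMul, h, zero_vecMul]

theorem Matrix.exists_left_inverse_of_vecMul_injective {r K : Type*} [Fintype r] [DecidableEq r]
    [DivisionRing K] {G : Matrix r r K} (h : Function.Injective G.vecMul) :
    ∃ P : Matrix r r K, P * G = 1 :=
  vecMul_surjective_iff_exists_left_inverse.mp
    (LinearMap.surjective_of_injective (f := G.vecMulLinear) h)

theorem Matrix.exists_rank_factorization {m n K : Type*} [Fintype m] [Fintype n] [DivisionRing K]
    (A : Matrix m n K) :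
    ∃ (r : ℕ) (B : Matrix m (Fin r) K) (C : Matrix (Fin r) n K),
      A = B * C ∧ (∃ W : Matrix (Fin r) m K, W * B = 1) ∧ Function.Injective C.vecMul := by
  classical
  set R := LinearMap.range A.vecMulLinear
  let b := Module.finBasis K R
  have hA : ∀ i, A i ∈ R := fun i => ⟨Pi.single i 1, single_one_vecMul i A⟩
  let B : Matrix m (Fin _) K := of fun i => b.repr ⟨A i, hA i⟩
  let C : Matrix (Fin _) n K := of fun k => (b k : n → K)
  have hC : Function.Injective C.vecMul :=
    vecMul_injective_iff.mpr (b.linearIndependent.map' R.subtype R.ker_subtype)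
  have hvC : ∀ x : Fin _ → K, x ᵥ* C = ((∑ k, x k • b k : R) : n → K) := by
    intro x
    simp only [vecMul_eq_sum, Submodule.coe_sum, Submodule.coe_smul]
    rfl
  have hBC : A = B * C := by
    ext i j
    rw [mul_apply_eq_vecMul, hvC]
    exact congrFun (congrArg Subtype.val (b.sum_repr ⟨A i, hA i⟩)).symm j
  refine ⟨_, B, C, hBC, ?_, hC⟩
  choose w hw using fun k => (b k).2
  refine ⟨of w, Matrix.ext fun k j => ?_⟩
  have : (w k ᵥ* B) ᵥ* C = Pi.single k 1 ᵥ* C := by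
    rw [vecMul_vecMul, ← hBC, ← vecMulLinear_apply, hw k, single_one_vecMul]
    rfl
  rw [mul_apply_eq_vecMul, one_eq_pi_single, ← hC this]
  rfl

theorem Matrix.conjTranspose_eq_of_mul_eq_one {r K : Type*} [Fintype r] [DecidableEq r]
    [DivisionRing K] [StarRing K] {G P : Matrix r r K} (hG : Gᴴ = G) (h : P * G = 1) :
    Pᴴ = P := by
  have hGP : G * P = 1 := mul_eq_one_comm.mp h
  calc Pᴴ = Pᴴ * (G * P) := by rw [hGP, Matrix.mul_one]
    _ = (G * P)ᴴ * P := by rw [conjTranspose_mul, hG, Matrix.mul_assoc]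
    _ = P := by rw [hGP, conjTranspose_one, Matrix.one_mul]

theorem isMP_mul_of_mul_gram_eq_one {m n r : Type} [Fintype m] [Fintype n] [Fintype r]
    [DecidableEq r] {B : Matrix m r ℍ} {C : Matrix r n ℍ} {P Q : Matrix r r ℍ}
    (hP : P * (C * Cᴴ) = 1) (hQ : Q * (Bᴴ * B) = 1) : IsMP (B * C) (Cᴴ * P * Q * Bᴴ) := by
  have hP' : (C * Cᴴ) * P = 1 := mul_eq_one_comm.mp hP
  have hPh : Pᴴ = P := conjTranspose_eq_of_mul_eq_one (by simp [conjTranspose_mul]) hP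
  have hQh : Qᴴ = Q := conjTranspose_eq_of_mul_eq_one (by simp [conjTranspose_mul]) hQ
  have hAX : B * C * (Cᴴ * P * Q * Bᴴ) = B * Q * Bᴴ := by
    simp only [← Matrix.mul_assoc]
    rw [Matrix.mul_assoc B C, Matrix.mul_assoc B, hP', Matrix.mul_one]
  have hXA : Cᴴ * P * Q * Bᴴ * (B * C) = Cᴴ * P * C := by
    simp only [← Matrix.mul_assoc]
    rw [Matrix.mul_assoc (Cᴴ * P * Q), Matrix.mul_assoc (Cᴴ * P), hQ, Matrix.mul_one]
  refine ⟨?_, ?_, ?_, ?_⟩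
  · rw [hAX]
    simp only [← Matrix.mul_assoc]
    rw [Matrix.mul_assoc (B * Q), Matrix.mul_assoc B, hQ, Matrix.mul_one]
  · rw [hXA]
    simp only [← Matrix.mul_assoc]
    rw [Matrix.mul_assoc (Cᴴ * P), Matrix.mul_assoc Cᴴ, hP, Matrix.mul_one]
  · rw [hAX]
    simp only [conjTranspose_mul, conjTranspose_conjTranspose, hQh, Matrix.mul_assoc]
  · rw [hXA]
    simp only [conjTranspose_mul, conjTranspose_conjTranspose, hPh, Matrix.mul_assoc]

theorem exists_isMP {m n : Type} [Fintype m] [Fintype n] (A : Matrix m n ℍ) : ∃ X, IsMP A X := by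
  obtain ⟨r, B, C, rfl, ⟨W, hWB⟩, hC⟩ := A.exists_rank_factorization
  obtain ⟨P, hP⟩ : ∃ P, P * (C * Cᴴ) = 1 := by
    refine exists_left_inverse_of_vecMul_injective
      ((injective_iff_map_eq_zero (C * Cᴴ).vecMulLinear).mpr fun x hx => hC ?_)
    show x ᵥ* C = 0 ᵥ* C
    rw [zero_vecMul]
    exact (Quaternion.vecMul_self_mul_conjTranspose_eq_zero C x).mp hx
  obtain ⟨Q, hQ⟩ : ∃ Q, Q * (Bᴴ * B) = 1 := by
    refine exists_left_inverse_of_vecMul_injective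
      ((injective_iff_map_eq_zero (Bᴴ * B).vecMulLinear).mpr fun x hx => ?_)
    have hxB : x ᵥ* Bᴴ = 0 := (Quaternion.vecMul_self_mul_conjTranspose_eq_zero Bᴴ x).mp
      (by rwa [conjTranspose_conjTranspose])
    rw [← vecMul_one x, ← conjTranspose_one, ← hWB, conjTranspose_mul, ← vecMul_vecMul, hxB,
      zero_vecMul]
  exact ⟨_, isMP_mul_of_mul_gram_eq_one hP hQ⟩

section MoorePenrose

variable {m n : Type} [Fintype m] [Fintype n]

theorem isMP_mp (A : Matrix m n ℍ) : IsMP A (mp A) := by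
  have h := exists_isMP A
  rw [mp, dif_pos h]
  exact h.choose_spec

theorem mul_mp_mul_self (A : Matrix m n ℍ) : A * mp A * A = A := (isMP_mp A).1

theorem mp_mul_self_mul_mp (A : Matrix m n ℍ) : mp A * A * mp A = mp A := (isMP_mp A).2.1

theorem conjTranspose_mul_mp (A : Matrix m n ℍ) : (A * mp A)ᴴ = A * mp A := (isMP_mp A).2.2.1

theorem conjTranspose_mp_mul (A : Matrix m n ℍ) : (mp A * A)ᴴ = mp A * A := (isMP_mp A).2.2.2

theorem mp_eq_mp_mul_mp_conjTranspose_mul (A : Matrix m n ℍ) : mp A = mp A * (mp A)ᴴ * Aᴴ := by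
  conv_lhs => rw [← mp_mul_self_mul_mp, Matrix.mul_assoc, ← conjTranspose_mul_mp,
    conjTranspose_mul, ← Matrix.mul_assoc]

theorem mp_eq_conjTranspose_mul_mp_conjTranspose_mul_mp (A : Matrix m n ℍ) :
    mp A = Aᴴ * (mp A)ᴴ * mp A := by
  conv_lhs => rw [← mp_mul_self_mul_mp, ← conjTranspose_mp_mul, conjTranspose_mul]

theorem projR_mul_self [DecidableEq m] (A : Matrix m n ℍ) : projR A * A = 0 := by
  rw [projR, Matrix.sub_mul, Matrix.one_mul, mul_mp_mul_self, sub_self]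

theorem projR_mul_self_mul [DecidableEq m] {l : Type} (A : Matrix m n ℍ) (X : Matrix n l ℍ) :
    projR A * (A * X) = 0 := by
  rw [← Matrix.mul_assoc, projR_mul_self, Matrix.zero_mul]

theorem mul_projL_self [DecidableEq n] (A : Matrix m n ℍ) : A * projL A = 0 := by
  rw [projL, Matrix.mul_sub, Matrix.mul_one, ← Matrix.mul_assoc, mul_mp_mul_self, sub_self]

theorem conjTranspose_projR [DecidableEq m] (A : Matrix m n ℍ) : (projR A)ᴴ = projR A := by
  rw [projR, conjTranspose_sub, conjTranspose_one, conjTranspose_mul_mp]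

theorem conjTranspose_projL [DecidableEq n] (A : Matrix m n ℍ) : (projL A)ᴴ = projL A := by
  rw [projL, conjTranspose_sub, conjTranspose_one, conjTranspose_mp_mul]

theorem isIdempotentElem_projR [DecidableEq m] (A : Matrix m n ℍ) :
    IsIdempotentElem (projR A) := by
  rw [IsIdempotentElem, projR, Matrix.sub_mul, Matrix.one_mul, Matrix.mul_sub, Matrix.mul_one,
    ← Matrix.mul_assoc, mul_mp_mul_self, sub_self, sub_zero]

theorem isIdempotentElem_projL [DecidableEq n] (A : Matrix m n ℍ) :
    IsIdempotentElem (projL A) := by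
  rw [IsIdempotentElem, projL, Matrix.sub_mul, Matrix.one_mul, Matrix.mul_sub, Matrix.mul_one,
    ← Matrix.mul_assoc, mp_mul_self_mul_mp, sub_self, sub_zero]

theorem mp_proj_mul_mul_proj [DecidableEq m] {l : Type} [Fintype l] {P : Matrix m m ℍ}
    (hP : Pᴴ = P) (hPP : IsIdempotentElem P) (C : Matrix m l ℍ) : mp (P * C) * P = mp (P * C) := by
  have h := mp_eq_mp_mul_mp_conjTranspose_mul (P * C)
  rw [conjTranspose_mul, hP] at h
  conv_lhs => rw [h, Matrix.mul_assoc _ (Cᴴ * P), Matrix.mul_assoc Cᴴ, hPP.eq, ← h]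

theorem proj_mul_mp_mul_proj [DecidableEq n] {l : Type} [Fintype l] {Q : Matrix n n ℍ}
    (hQ : Qᴴ = Q) (hQQ : IsIdempotentElem Q) (D : Matrix l n ℍ) : Q * mp (D * Q) = mp (D * Q) := by
  have h := mp_eq_conjTranspose_mul_mp_conjTranspose_mul_mp (D * Q)
  rw [conjTranspose_mul, hQ] at h
  conv_lhs =>
    rw [h, ← Matrix.mul_assoc, ← Matrix.mul_assoc, ← Matrix.mul_assoc Q Q, hQQ.eq, ← h]

end MoorePenrose

theorem Matrix.five_term_decomposition {l s R : Type*} [Fintype l] [Fintype s] [DecidableEq l]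
    [DecidableEq s] [Ring R] {P₁ P₂ : Matrix l l R} {Q₁ Q₂ : Matrix s s R} (W : Matrix l s R)
    (hP : P₁ * P₂ = 0) (hQ : Q₁ * Q₂ = Q₂) :
    W = P₁ * (W * Q₁) + P₂ * (W * Q₂) + (1 - P₁) * (1 - P₂) * (W * Q₂)
      + (1 - P₁) * (W * Q₁) * (1 - Q₂) + W * (1 - Q₁) := by
  have hP' : ∀ X : Matrix l s R, P₁ * (P₂ * X) = 0 := fun X => by
    rw [← Matrix.mul_assoc, hP, Matrix.zero_mul]
  simp only [Matrix.mul_sub, Matrix.sub_mul, Matrix.mul_one, Matrix.one_mul, Matrix.mul_assoc, hQ,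
    hP', sub_zero]
  abel

namespace QData

section LeftFactors

variable {m k o n q p l s : Type} [Fintype m] [Fintype k] [Fintype q] [Fintype l] [DecidableEq m]
  (d : QData m k o n q p l s)

theorem mp_M_mul_projR_A0 : mp d.M * projR d.A0 = mp d.M :=
  mp_proj_mul_mul_proj (conjTranspose_projR _) (isIdempotentElem_projR _) d.C0

variable [DecidableEq l]

theorem projL_M_mul_mp_S : projL d.M * mp d.S = mp d.S :=
  proj_mul_mp_mul_proj (conjTranspose_projL _) (isIdempotentElem_projL _) d.C0

theorem mp_M_mul_M_mul_mp_S : mp d.M * d.M * mp d.S = 0 := by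
  have h := d.projL_M_mul_mp_S
  rwa [projL, Matrix.sub_mul, Matrix.one_mul, sub_eq_self] at h

theorem S_mul_mp_C0_mul_C0 : d.S * mp d.C0 * d.C0 = d.S := by
  have hM : d.M * projL d.C0 = 0 := by
    rw [M, Matrix.mul_assoc, mul_projL_self, Matrix.mul_zero]
  have hS : d.S * projL d.C0 = 0 := by
    rw [S, projL, Matrix.mul_assoc, Matrix.sub_mul, Matrix.one_mul, Matrix.mul_assoc, hM,
      Matrix.mul_zero, sub_zero, mul_projL_self]
  rw [projL, Matrix.mul_sub, Matrix.mul_one, sub_eq_zero] at hS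
  rw [Matrix.mul_assoc, ← hS]

end LeftFactors

section RightFactors

variable {m k o n q p l s : Type} [Fintype o] [Fintype n] [Fintype p] [Fintype s] [DecidableEq n]
  (d : QData m k o n q p l s)

theorem projL_B0_mul_mp_N : projL d.B0 * mp d.N = mp d.N :=
  proj_mul_mp_mul_proj (conjTranspose_projL _) (isIdempotentElem_projL _) d.D0

theorem D0_mul_mp_D0_mul_N : d.D0 * mp d.D0 * d.N = d.N := by
  rw [N, ← Matrix.mul_assoc, mul_mp_mul_self]

end RightFactors

variable {m k o n q p l s : Type} [Fintype m] [Fintype k] [Fintype o] [Fintype n] [Fintype q]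
  [Fintype p] [Fintype l] [Fintype s] [DecidableEq m] [DecidableEq n]

def IsReducedSolution (d : QData m k o n q p l s) (Z : Matrix q p ℍ) (W : Matrix l s ℍ) : Prop :=
  d.E0 = d.A0 * Z * d.B0 + d.C0 * W * d.D0

theorem isReducedSolution_of_eq (d : QData m k o n q p l s) {X : Matrix k n ℍ}
    {Y : Matrix m o ℍ} {Z : Matrix q p ℍ} {W : Matrix l s ℍ}
    (h : d.A * X + Y * d.B + d.C * Z * d.D + d.F * W * d.G = d.E) :
    d.IsReducedSolution Z W := by
  rw [IsReducedSolution, E0, ← h]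
  simp only [A0, B0, C0, D0, Matrix.mul_add, Matrix.add_mul, Matrix.mul_assoc,
    projR_mul_self_mul, mul_projL_self, Matrix.mul_zero, zero_add]

variable {d : QData m k o n q p l s} {Z : Matrix q p ℍ} {W : Matrix l s ℍ}

theorem IsReducedSolution.projR_A0_mul_E0 (h : d.IsReducedSolution Z W) :
    projR d.A0 * d.E0 = d.M * W * d.D0 := by
  rw [h, Matrix.mul_add, ← Matrix.mul_assoc, ← Matrix.mul_assoc, projR_mul_self,
    Matrix.zero_mul, Matrix.zero_mul, zero_add, M]
  simp only [Matrix.mul_assoc]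

theorem IsReducedSolution.E0_mul_projL_B0 (h : d.IsReducedSolution Z W) :
    d.E0 * projL d.B0 = d.C0 * W * d.N := by
  rw [h, Matrix.add_mul, Matrix.mul_assoc _ d.B0, mul_projL_self, Matrix.mul_zero, zero_add, N]
  simp only [Matrix.mul_assoc]

theorem IsReducedSolution.consistent (h : d.IsReducedSolution Z W) : d.Consistent := by
  refine ⟨?_, ?_, ?_, ?_⟩
  · rw [Matrix.mul_assoc, h.projR_A0_mul_E0, Matrix.mul_assoc, projR_mul_self_mul]
  · rw [h.E0_mul_projL_B0, Matrix.mul_assoc, mul_projL_self, Matrix.mul_zero]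
  · rw [h.projR_A0_mul_E0, Matrix.mul_assoc, mul_projL_self, Matrix.mul_zero]
  · rw [Matrix.mul_assoc, h.E0_mul_projL_B0, Matrix.mul_assoc, projR_mul_self_mul]

theorem IsReducedSolution.mp_M_mul_E0 (h : d.IsReducedSolution Z W) :
    mp d.M * d.E0 = mp d.M * d.M * W * d.D0 := by
  rw [← d.mp_M_mul_projR_A0, Matrix.mul_assoc, h.projR_A0_mul_E0, d.mp_M_mul_projR_A0]
  simp only [Matrix.mul_assoc]

theorem IsReducedSolution.E0_mul_mp_N (h : d.IsReducedSolution Z W) :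
    d.E0 * mp d.N = d.C0 * W * d.N * mp d.N := by
  rw [← d.projL_B0_mul_mp_N, ← Matrix.mul_assoc, h.E0_mul_projL_B0, d.projL_B0_mul_mp_N]

variable [DecidableEq l] [DecidableEq s]

theorem IsReducedSolution.W_eq (h : d.IsReducedSolution Z W) :
    W = mp d.M * d.E0 * mp d.D0 + mp d.S * d.S * mp d.C0 * d.E0 * mp d.N
      + projL d.M * projL d.S * (W * (d.N * mp d.N))
      + projL d.M * (W * (d.D0 * mp d.D0)) * projR d.N + W * projR d.D0 := by
  have hMS : mp d.M * d.M * (mp d.S * d.S) = 0 := by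
    rw [← Matrix.mul_assoc, d.mp_M_mul_M_mul_mp_S, Matrix.zero_mul]
  have hDN : d.D0 * mp d.D0 * (d.N * mp d.N) = d.N * mp d.N := by
    rw [← Matrix.mul_assoc, d.D0_mul_mp_D0_mul_N]
  have e₁ : mp d.M * d.E0 * mp d.D0 = mp d.M * d.M * (W * (d.D0 * mp d.D0)) := by
    rw [h.mp_M_mul_E0]
    simp only [Matrix.mul_assoc]
  have e₂ : mp d.S * d.S * mp d.C0 * d.E0 * mp d.N = mp d.S * d.S * (W * (d.N * mp d.N)) :=
    calc mp d.S * d.S * mp d.C0 * d.E0 * mp d.N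
        = mp d.S * (d.S * mp d.C0 * d.C0) * (W * (d.N * mp d.N)) := by
          rw [Matrix.mul_assoc _ d.E0, h.E0_mul_mp_N]
          simp only [Matrix.mul_assoc]
      _ = mp d.S * d.S * (W * (d.N * mp d.N)) := by rw [d.S_mul_mp_C0_mul_C0]
  rw [e₁, e₂]
  exact Matrix.five_term_decomposition W hMS hDN

theorem IsReducedSolution.C0_mul_W_mul_D0 (h : d.IsReducedSolution Z W) :
    d.C0 * W * d.D0 = d.C0 * mp d.M * d.E0 + d.S * mp d.C0 * d.E0 * mp d.N * d.D0
      + d.S * (W * (d.D0 * mp d.D0)) * projR d.N * d.D0 := by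
  have e₁ : d.C0 * mp d.M * d.E0 = d.C0 * (mp d.M * d.M) * W * d.D0 := by
    rw [Matrix.mul_assoc _ (mp d.M), h.mp_M_mul_E0]
    simp only [Matrix.mul_assoc]
  have e₂ : d.S * mp d.C0 * d.E0 * mp d.N = d.S * W * (d.N * mp d.N) := by
    rw [Matrix.mul_assoc _ d.E0, h.E0_mul_mp_N]
    simp only [← Matrix.mul_assoc]
    rw [d.S_mul_mp_C0_mul_C0]
  have e₃ : d.D0 * mp d.D0 * projR d.N * d.D0 = d.D0 - d.N * mp d.N * d.D0 := by
    rw [projR, Matrix.mul_sub, Matrix.mul_one, Matrix.sub_mul, mul_mp_mul_self,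
      ← Matrix.mul_assoc (d.D0 * mp d.D0) d.N, d.D0_mul_mp_D0_mul_N]
  have e₄ : d.S * (W * (d.D0 * mp d.D0)) * projR d.N * d.D0
      = d.S * W * (d.D0 * mp d.D0 * projR d.N * d.D0) := by
    simp only [Matrix.mul_assoc]
  rw [e₁, e₂, e₄, e₃, S, projL]
  simp only [Matrix.mul_sub, Matrix.sub_mul, Matrix.mul_one, Matrix.mul_assoc]
  abel

theorem IsReducedSolution.Z_eq [DecidableEq q] [DecidableEq p] (h : d.IsReducedSolution Z W) :
    Z = mp d.A0 * d.E0 * mp d.B0 - mp d.A0 * d.C0 * mp d.M * d.E0 * mp d.B0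
      - mp d.A0 * d.S * mp d.C0 * d.E0 * mp d.N * d.D0 * mp d.B0
      - mp d.A0 * d.S * (W * (d.D0 * mp d.D0)) * (projR d.N * d.D0 * mp d.B0)
      + projL d.A0 * (Z * (d.B0 * mp d.B0)) + Z * projR d.B0 := by
  have hAZB : d.A0 * Z * d.B0 = d.E0 - d.C0 * W * d.D0 := eq_sub_of_add_eq h.symm
  have hZ : Z = mp d.A0 * (d.A0 * Z * d.B0) * mp d.B0
      + projL d.A0 * (Z * (d.B0 * mp d.B0)) + Z * projR d.B0 := by
    simp only [projL, projR, Matrix.sub_mul, Matrix.mul_sub, Matrix.one_mul, Matrix.mul_one,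
      Matrix.mul_assoc]
    abel
  conv_lhs => rw [hZ, hAZB, h.C0_mul_W_mul_D0]
  simp only [Matrix.mul_sub, Matrix.sub_mul, Matrix.mul_add, Matrix.add_mul, Matrix.mul_assoc]
  abel

theorem IsReducedSolution.couple {k' o' l' s' : Type} [Fintype k'] [Fintype o'] [Fintype l']
    [Fintype s'] [DecidableEq k'] [DecidableEq o'] [DecidableEq l'] [DecidableEq s']
    {d' : QData m k' o' n l s l' s'} {W' : Matrix l' s' ℍ}
    (h : d.IsReducedSolution Z W) (h' : d'.IsReducedSolution W W') :
    (d.couple d').IsReducedSolution (-(W * (d.D0 * mp d.D0))) (-(W' * (d'.D0 * mp d'.D0))) := by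
  refine isReducedSolution_of_eq _
    (X := fromRows (-(W * (d.N * mp d.N))) (-(W * (d'.B0 * mp d'.B0)))) (Y := fromCols (-W) (-W)) ?_
  dsimp only [QData.couple]
  rw [fromCols_mul_fromRows, fromCols_mul_fromRows]
  linear_combination (norm := skip) h.W_eq - h'.Z_eq
  simp only [Matrix.neg_mul, Matrix.mul_neg, neg_neg, Matrix.mul_assoc]
  abel

end QData

theorem system_three_solvable_necessary_general {m n q p k₁ k₂ k₃ o₁ o₂ o₃ : Type}
    [Fintype m] [Fintype n] [Fintype q] [Fintype p]
    [Fintype k₁] [Fintype k₂] [Fintype k₃] [Fintype o₁] [Fintype o₂] [Fintype o₃]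
    [DecidableEq m] [DecidableEq n] [DecidableEq q] [DecidableEq p]
    (A₁ : Matrix m k₁ (Quaternion ℝ)) (A₂ : Matrix m k₂ (Quaternion ℝ))
    (A₃ : Matrix m k₃ (Quaternion ℝ))
    (B₁ : Matrix o₁ n (Quaternion ℝ)) (B₂ : Matrix o₂ n (Quaternion ℝ))
    (B₃ : Matrix o₃ n (Quaternion ℝ))
    (C₁ C₂ C₃ F₁ F₂ F₃ : Matrix m q (Quaternion ℝ))
    (D₁ D₂ D₃ G₁ G₂ G₃ : Matrix p n (Quaternion ℝ))
    (E₁ E₂ E₃ : Matrix m n (Quaternion ℝ))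
    (hsol : ∃ (X₁ : Matrix k₁ n (Quaternion ℝ)) (X₂ : Matrix k₂ n (Quaternion ℝ))
        (X₃ : Matrix k₃ n (Quaternion ℝ))
        (Y₁ : Matrix m o₁ (Quaternion ℝ)) (Y₂ : Matrix m o₂ (Quaternion ℝ))
        (Y₃ : Matrix m o₃ (Quaternion ℝ))
        (Z₁ Z₂ Z₃ Z₄ : Matrix q p (Quaternion ℝ)),
        A₁ * X₁ + Y₁ * B₁ + C₁ * Z₁ * D₁ + F₁ * Z₂ * G₁ = E₁ ∧
        A₂ * X₂ + Y₂ * B₂ + C₂ * Z₂ * D₂ + F₂ * Z₃ * G₂ = E₂ ∧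
        A₃ * X₃ + Y₃ * B₃ + C₃ * Z₃ * D₃ + F₃ * Z₄ * G₃ = E₃) :
    (QData.mk A₁ B₁ C₁ D₁ F₁ G₁ E₁).Consistent ∧
    (QData.mk A₂ B₂ C₂ D₂ F₂ G₂ E₂).Consistent ∧
    (QData.mk A₃ B₃ C₃ D₃ F₃ G₃ E₃).Consistent ∧
    ((QData.mk A₁ B₁ C₁ D₁ F₁ G₁ E₁).couple (QData.mk A₂ B₂ C₂ D₂ F₂ G₂ E₂)).Consistent ∧
    ((QData.mk A₂ B₂ C₂ D₂ F₂ G₂ E₂).couple (QData.mk A₃ B₃ C₃ D₃ F₃ G₃ E₃)).Consistent ∧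
    (((QData.mk A₁ B₁ C₁ D₁ F₁ G₁ E₁).couple (QData.mk A₂ B₂ C₂ D₂ F₂ G₂ E₂)).couple
      ((QData.mk A₂ B₂ C₂ D₂ F₂ G₂ E₂).couple (QData.mk A₃ B₃ C₃ D₃ F₃ G₃ E₃))).Consistent := by
  obtain ⟨X₁, X₂, X₃, Y₁, Y₂, Y₃, Z₁, Z₂, Z₃, Z₄, h₁, h₂, h₃⟩ := hsol
  set d₁ := QData.mk A₁ B₁ C₁ D₁ F₁ G₁ E₁
  set d₂ := QData.mk A₂ B₂ C₂ D₂ F₂ G₂ E₂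
  set d₃ := QData.mk A₃ B₃ C₃ D₃ F₃ G₃ E₃
  have r₁ : d₁.IsReducedSolution Z₁ Z₂ := d₁.isReducedSolution_of_eq h₁
  have r₂ : d₂.IsReducedSolution Z₂ Z₃ := d₂.isReducedSolution_of_eq h₂
  have r₃ : d₃.IsReducedSolution Z₃ Z₄ := d₃.isReducedSolution_of_eq h₃
  have r₁₂ := r₁.couple r₂
  have r₂₃ := r₂.couple r₃
  exact ⟨r₁.consistent, r₂.consistent, r₃.consistent, r₁₂.consistent, r₂₃.consistent,
    (r₁₂.couple r₂₃).consistent⟩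

/-- If the system `Aᵢ Xᵢ + Yᵢ Bᵢ + Cᵢ Zᵢ Dᵢ + Fᵢ Z_{i+1} Gᵢ = Eᵢ` (i = 1, 2, 3)
is solvable, then each data, each coupled data and the doubly coupled data
satisfy the consistency conditions. -/
theorem system_three_solvable_necessary {m n q p k₁ k₂ k₃ o₁ o₂ o₃ : Type}
    [Fintype m] [Fintype n] [Fintype q] [Fintype p]
    [Fintype k₁] [Fintype k₂] [Fintype k₃] [Fintype o₁] [Fintype o₂] [Fintype o₃]
    [DecidableEq m] [DecidableEq n] [DecidableEq q] [DecidableEq p]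
    [DecidableEq k₁] [DecidableEq k₂] [DecidableEq k₃]
    [DecidableEq o₁] [DecidableEq o₂] [DecidableEq o₃]
    (A₁ : Matrix m k₁ (Quaternion ℝ)) (A₂ : Matrix m k₂ (Quaternion ℝ))
    (A₃ : Matrix m k₃ (Quaternion ℝ))
    (B₁ : Matrix o₁ n (Quaternion ℝ)) (B₂ : Matrix o₂ n (Quaternion ℝ))
    (B₃ : Matrix o₃ n (Quaternion ℝ))
    (C₁ C₂ C₃ F₁ F₂ F₃ : Matrix m q (Quaternion ℝ))
    (D₁ D₂ D₃ G₁ G₂ G₃ : Matrix p n (Quaternion ℝ))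
    (E₁ E₂ E₃ : Matrix m n (Quaternion ℝ))
    (hsol : ∃ (X₁ : Matrix k₁ n (Quaternion ℝ)) (X₂ : Matrix k₂ n (Quaternion ℝ))
        (X₃ : Matrix k₃ n (Quaternion ℝ))
        (Y₁ : Matrix m o₁ (Quaternion ℝ)) (Y₂ : Matrix m o₂ (Quaternion ℝ))
        (Y₃ : Matrix m o₃ (Quaternion ℝ))
        (Z₁ Z₂ Z₃ Z₄ : Matrix q p (Quaternion ℝ)),
        A₁ * X₁ + Y₁ * B₁ + C₁ * Z₁ * D₁ + F₁ * Z₂ * G₁ = E₁ ∧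
        A₂ * X₂ + Y₂ * B₂ + C₂ * Z₂ * D₂ + F₂ * Z₃ * G₂ = E₂ ∧
        A₃ * X₃ + Y₃ * B₃ + C₃ * Z₃ * D₃ + F₃ * Z₄ * G₃ = E₃) :
    (QData.mk A₁ B₁ C₁ D₁ F₁ G₁ E₁).Consistent ∧
    (QData.mk A₂ B₂ C₂ D₂ F₂ G₂ E₂).Consistent ∧
    (QData.mk A₃ B₃ C₃ D₃ F₃ G₃ E₃).Consistent ∧
    ((QData.mk A₁ B₁ C₁ D₁ F₁ G₁ E₁).couple (QData.mk A₂ B₂ C₂ D₂ F₂ G₂ E₂)).Consistent ∧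
    ((QData.mk A₂ B₂ C₂ D₂ F₂ G₂ E₂).couple (QData.mk A₃ B₃ C₃ D₃ F₃ G₃ E₃)).Consistent ∧
    (((QData.mk A₁ B₁ C₁ D₁ F₁ G₁ E₁).couple (QData.mk A₂ B₂ C₂ D₂ F₂ G₂ E₂)).couple
      ((QData.mk A₂ B₂ C₂ D₂ F₂ G₂ E₂).couple (QData.mk A₃ B₃ C₃ D₃ F₃ G₃ E₃))).Consistent :=
  system_three_solvable_necessary_general A₁ A₂ A₃ B₁ B₂ B₃ C₁ C₂ C₃ F₁ F₂ F₃ D₁ D₂ D₃ G₁ G₂ G₃ E₁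
    E₂ E₃ hsol
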